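/- arXiv:1001.2088 — 2 statements merged into one kernel-verified Lean document; each statement's English description precedes it below -/
import Mathlib

section
/- Fix L > 0, k ≥ 1, l = arcsinh(1/(2 sinh L)), l_k = arcsinh(1/(2 sinh(kL))). Let C = {R e^{iθ} : 1 ≤ R ≤ e^{2l}, θ₁ ≤ θ ≤ π/2} ⊂ ℍ² with cos θ₁ = tanh L, and C_k = {R e^{iθ} : 1 ≤ R ≤ e^{2 l_k}, θ_k ≤ θ ≤ π/2} with cos θ_k = tanh(kL). Define h_k(R, θ) = (R^{l_k/l}, arccos(tanh(k·arccosh(1/sin θ)))). Then h_k maps C homeomorphically onto C_k. -/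
/-!
Both polar coordinates are transformed separately. The radial map `R ↦ R ^ (l_k / l)` is an
increasing bijection `[1, e^{2l}] → [1, e^{2 l_k}]`. For the angle, `d ↦ arccos (tanh d)` is a
decreasing bijection `[0, ∞) → (0, π/2]` with inverse `θ ↦ arcosh (1 / sin θ)` (the hyperbolic
distance from `R e^{iθ}` to the imaginary axis), so the angular map multiplies that distance by
`k`: it is continuous and increasing and sends `θ₁`, `π/2` (distances `L`, `0`) to `θ_k`, `π/2`.
A continuous bijection from the compact rectangle `C` onto the Hausdorff `C_k` is a
homeomorphism.
-/

open Real Set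

/-- The inverse hyperbolic cosine, `arccosh x = log (x + √(x² - 1))`. -/
noncomputable def arccosh (x : ℝ) : ℝ := Real.log (x + Real.sqrt (x ^ 2 - 1))

theorem arccosh_eq_arcosh : arccosh = Real.arcosh := rfl

theorem Set.BijOn.exists_homeomorph {X Y : Type*} [TopologicalSpace X] [TopologicalSpace Y]
    [T2Space Y] {f : X → Y} {s : Set X} {t : Set Y} (hf : BijOn f s t) (hs : IsCompact s)
    (hcont : ContinuousOn f s) : ∃ φ : s ≃ₜ t, ∀ x : s, (φ x : Y) = f x := by
  have : CompactSpace s := isCompact_iff_compactSpace.mp hs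
  exact ⟨(hcont.mapsToRestrict hf.mapsTo).homeoOfEquivCompactToT2 (f := hf.equiv f),
    fun _ => rfl⟩

theorem StrictMonoOn.bijOn_Icc {α δ : Type*} [ConditionallyCompleteLinearOrder α]
    [TopologicalSpace α] [OrderTopology α] [DenselyOrdered α] [LinearOrder δ]
    [TopologicalSpace δ] [OrderClosedTopology δ] {f : α → δ} {a b : α}
    (hmono : StrictMonoOn f (Icc a b)) (hab : a ≤ b) (hf : ContinuousOn f (Icc a b)) :
    BijOn f (Icc a b) (Icc (f a) (f b)) :=
  hf.image_Icc_of_monotoneOn hab hmono.monotoneOn ▸ hmono.injOn.bijOn_image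

namespace Real

theorem tanh_strictMono : StrictMono tanh := fun a b hab =>
  have hmem : ∀ x, tanh x ∈ Ioo (-1) 1 := fun x => ⟨neg_one_lt_tanh x, tanh_lt_one x⟩
  (strictMonoOn_artanh.lt_iff_lt (hmem a) (hmem b)).mp (by rwa [artanh_tanh, artanh_tanh])

theorem continuous_tanh : Continuous tanh := by
  simp only [funext tanh_eq_sinh_div_cosh]
  exact continuous_sinh.div continuous_cosh fun x => (cosh_pos x).ne'

theorem tanh_nonneg {x : ℝ} (hx : 0 ≤ x) : 0 ≤ tanh x :=
  tanh_zero ▸ tanh_strictMono.monotone hx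

theorem strictAnti_arccos_tanh : StrictAnti fun x => arccos (tanh x) := fun _ _ hab =>
  strictAntiOn_arccos ⟨(neg_one_lt_tanh _).le, (tanh_lt_one _).le⟩
    ⟨(neg_one_lt_tanh _).le, (tanh_lt_one _).le⟩ (tanh_strictMono hab)

theorem arccos_tanh_mem_Ioc {x : ℝ} (hx : 0 ≤ x) : arccos (tanh x) ∈ Ioc 0 (π / 2) :=
  ⟨arccos_pos.2 (tanh_lt_one x), arccos_le_pi_div_two.2 (tanh_nonneg hx)⟩

theorem sin_arccos_tanh (x : ℝ) : sin (arccos (tanh x)) = 1 / cosh x := by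
  have hsq : 1 - tanh x ^ 2 = (1 / cosh x) ^ 2 := by
    rw [tanh_eq_sinh_div_cosh]
    field_simp
    linarith [cosh_sq_sub_sinh_sq x]
  rw [sin_arccos, hsq, sqrt_sq (one_div_pos.2 (cosh_pos x)).le]

theorem arcosh_one_div_sin_arccos_tanh {x : ℝ} (hx : 0 ≤ x) :
    arcosh (1 / sin (arccos (tanh x))) = x := by
  rw [sin_arccos_tanh, one_div_one_div, arcosh_cosh hx]

theorem one_le_one_div_sin {θ : ℝ} (hθ : θ ∈ Ioc 0 (π / 2)) : 1 ≤ 1 / sin θ :=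
  one_le_one_div (sin_pos_of_pos_of_lt_pi hθ.1 (by linarith [hθ.2, pi_pos])) (sin_le_one θ)

theorem strictAntiOn_arcosh_one_div_sin :
    StrictAntiOn (fun θ => arcosh (1 / sin θ)) (Ioc 0 (π / 2)) := by
  intro a ha b hb hab
  have hsin_pos : 0 < sin a := sin_pos_of_pos_of_lt_pi ha.1 (by linarith [ha.2, pi_pos])
  have hsin_lt : sin a < sin b :=
    strictMonoOn_sin ⟨by linarith [ha.1, pi_pos], ha.2⟩ ⟨by linarith [hb.1, pi_pos], hb.2⟩ hab
  exact strictMonoOn_arcosh (one_div_pos.2 (hsin_pos.trans hsin_lt)) (one_div_pos.2 hsin_pos)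
    (one_div_lt_one_div_of_lt hsin_pos hsin_lt)

theorem continuousOn_arcosh_one_div_sin :
    ContinuousOn (fun θ => arcosh (1 / sin θ)) (Ioc 0 (π / 2)) :=
  continuousOn_arcosh.comp
    (continuousOn_const.div continuous_sin.continuousOn fun _ hθ =>
      (one_div_pos.1 (one_pos.trans_le (one_le_one_div_sin hθ))).ne')
    fun _ hθ => one_le_one_div_sin hθ

end Real

noncomputable def stretchAngle (k θ : ℝ) : ℝ := arccos (tanh (k * arcosh (1 / sin θ)))

theorem strictMonoOn_stretchAngle {k : ℝ} (hk : 0 < k) :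
    StrictMonoOn (stretchAngle k) (Ioc 0 (π / 2)) :=
  (strictAnti_arccos_tanh.comp_strictMono (strictMono_mul_left_of_pos hk)).comp_strictAntiOn
    strictAntiOn_arcosh_one_div_sin

theorem continuousOn_stretchAngle (k : ℝ) : ContinuousOn (stretchAngle k) (Ioc 0 (π / 2)) :=
  continuous_arccos.comp_continuousOn <| continuous_tanh.comp_continuousOn <|
    continuousOn_const.mul continuousOn_arcosh_one_div_sin

theorem stretchAngle_arccos_tanh (k : ℝ) {L : ℝ} (hL : 0 ≤ L) :
    stretchAngle k (arccos (tanh L)) = arccos (tanh (k * L)) := by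
  rw [stretchAngle, arcosh_one_div_sin_arccos_tanh hL]

theorem stretchAngle_pi_div_two (k : ℝ) : stretchAngle k (π / 2) = π / 2 := by
  simp [stretchAngle, arcosh_zero]

theorem bijOn_stretchAngle {k L : ℝ} (hk : 0 < k) (hL : 0 ≤ L) :
    BijOn (stretchAngle k) (Icc (arccos (tanh L)) (π / 2))
      (Icc (arccos (tanh (k * L))) (π / 2)) := by
  have hsub : Icc (arccos (tanh L)) (π / 2) ⊆ Ioc 0 (π / 2) :=
    Icc_subset_Ioc (arccos_tanh_mem_Ioc hL).1 le_rfl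
  have := ((strictMonoOn_stretchAngle hk).mono hsub).bijOn_Icc (arccos_tanh_mem_Ioc hL).2
    ((continuousOn_stretchAngle k).mono hsub)
  rwa [stretchAngle_arccos_tanh k hL, stretchAngle_pi_div_two] at this

theorem bijOn_rpow_Icc {a b r : ℝ} (ha : 0 ≤ a) (hab : a ≤ b) (hr : 0 < r) :
    BijOn (fun x : ℝ => x ^ r) (Icc a b) (Icc (a ^ r) (b ^ r)) :=
  ((strictMonoOn_rpow_Ici_of_exponent_pos hr).mono fun _ hx => mem_Ici.2 (ha.trans hx.1)).bijOn_Icc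
    hab fun x _ => (continuousAt_rpow_const x r (Or.inr hr.le)).continuousWithinAt

/-- Fix `L > 0`, `k ≥ 1`, `l = arcsinh (1/(2 sinh L))`, `l_k = arcsinh (1/(2 sinh (kL)))`.
In polar coordinates `(R, θ)` on the upper half-plane, let
`C = {(R, θ) : 1 ≤ R ≤ e^{2l}, θ₁ ≤ θ ≤ π/2}` with `θ₁ = arccos (tanh L)` and
`C_k = {(R, θ) : 1 ≤ R ≤ e^{2 l_k}, θ_k ≤ θ ≤ π/2}` with `θ_k = arccos (tanh (kL))`.
Then `h_k (R, θ) = (R^{l_k/l}, arccos (tanh (k · arccosh (1 / sin θ))))` maps `C`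
homeomorphically onto `C_k`. -/
theorem stmt7 (L k : ℝ) (hL : 0 < L) (hk : 1 ≤ k)
    (l lk θ₁ θk : ℝ)
    (hl : l = Real.arsinh (1 / (2 * Real.sinh L)))
    (hlk : lk = Real.arsinh (1 / (2 * Real.sinh (k * L))))
    (hθ₁ : Real.cos θ₁ = Real.tanh L) (hθ₁' : θ₁ ∈ Set.Icc 0 (π / 2))
    (hθk : Real.cos θk = Real.tanh (k * L)) (hθk' : θk ∈ Set.Icc 0 (π / 2))
    (C Ck : Set (ℝ × ℝ))
    (hC : C = Set.Icc 1 (Real.exp (2 * l)) ×ˢ Set.Icc θ₁ (π / 2))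
    (hCk : Ck = Set.Icc 1 (Real.exp (2 * lk)) ×ˢ Set.Icc θk (π / 2))
    (h : ℝ × ℝ → ℝ × ℝ)
    (hh : ∀ p : ℝ × ℝ,
      h p = (p.1 ^ (lk / l), Real.arccos (Real.tanh (k * arccosh (1 / Real.sin p.2))))) :
    ∃ φ : C ≃ₜ Ck, ∀ x : C, (φ x : ℝ × ℝ) = h x := by
  have hk0 : 0 < k := by linarith
  have hl0 : 0 < l := hl ▸ arsinh_pos_iff.2 (by have := sinh_pos_iff.2 hL; positivity)
  have hlk0 : 0 < lk :=
    hlk ▸ arsinh_pos_iff.2 (by have := sinh_pos_iff.2 (mul_pos hk0 hL); positivity)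
  have hθ₁_eq : θ₁ = arccos (tanh L) := by
    rw [← hθ₁, arccos_cos hθ₁'.1 (by linarith [hθ₁'.2, pi_pos])]
  have hθk_eq : θk = arccos (tanh (k * L)) := by
    rw [← hθk, arccos_cos hθk'.1 (by linarith [hθk'.2, pi_pos])]
  have hradial :
      BijOn (fun R : ℝ => R ^ (lk / l)) (Icc 1 (exp (2 * l))) (Icc 1 (exp (2 * lk))) := by
    have hexp : 2 * l * (lk / l) = 2 * lk := by field_simp
    have := bijOn_rpow_Icc (b := exp (2 * l)) zero_le_one (one_le_exp (by positivity))
      (div_pos hlk0 hl0)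
    rwa [one_rpow, ← exp_mul, hexp] at this
  subst hθ₁_eq hθk_eq
  have hsub : Icc (arccos (tanh L)) (π / 2) ⊆ Ioc 0 (π / 2) :=
    Icc_subset_Ioc (arccos_tanh_mem_Ioc hL.le).1 le_rfl
  rw [arccosh_eq_arcosh] at hh
  have hbij : BijOn h C Ck := by
    rw [hC, hCk]
    exact (hradial.prodMap (bijOn_stretchAngle hk0 hL.le)).congr fun p _ => (hh p).symm
  have hcont : ContinuousOn h C := by
    rw [hC]
    refine ContinuousOn.congr ?_ fun p _ => hh p
    exact ((continuous_id.rpow_const fun _ => Or.inr (div_pos hlk0 hl0).le).continuousOn).prodMap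
      ((continuousOn_stretchAngle k).mono hsub)
  exact hbij.exists_homeomorph (hC ▸ isCompact_Icc.prod isCompact_Icc) hcont
end

section
/- Let P be a hyperbolic pair of pants with boundary lengths l(C₁), l(C₂), l(C₃), and let K(x,y) = log max_{i=1,2,3} l_y(C_i)/l_x(C_i) on the Teichmüller space of the pair of pants (parametrized by the triple of boundary lengths in (0,∞)³). Then K satisfies the triangle inequality but is not an asymmetric metric: there exist x ≠ y with K(x,y) ≤ 0, and indeed there exist distinct x, y with K(x,y) = 0. -/
/-!
The ratio of boundary lengths factors as `z i / x i = (y i / x i) * (z i / y i)`, so the maximal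
ratio is submultiplicative and its logarithm `K` is subadditive. On the other hand the maximal
ratio equals `1`, i.e. `K x y = 0`, as soon as `y ≤ x` with equality in one coordinate: shrinking
two boundary curves of `x` while keeping the third gives `y ≠ x` with `K x y = 0`.
-/

open Real

/-- `K` on the Teichmüller space of a pair of pants, identified with `(0,∞)³` via the three
boundary lengths: `K x y = log max_i (y i / x i)`. -/
noncomputable def Kpants (x y : Fin 3 → ℝ) : ℝ :=
  Real.log (max (y 0 / x 0) (max (y 1 / x 1) (y 2 / x 2)))

open Finset

section MaxRatio

variable {ι : Type*} [Fintype ι] [Nonempty ι] {x y z : ι → ℝ}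

theorem sup'_div_pos (hx : ∀ i, 0 < x i) (hy : ∀ i, 0 < y i) :
    0 < univ.sup' univ_nonempty (fun i => y i / x i) :=
  (div_pos (hy (Classical.arbitrary ι)) (hx _)).trans_le
    (le_sup' (fun i => y i / x i) (mem_univ _))

theorem sup'_div_le_mul (hx : ∀ i, 0 < x i) (hy : ∀ i, 0 < y i) (hz : ∀ i, 0 < z i) :
    univ.sup' univ_nonempty (fun i => z i / x i) ≤
      univ.sup' univ_nonempty (fun i => y i / x i) *
        univ.sup' univ_nonempty (fun i => z i / y i) := by
  refine sup'_le _ _ fun i _ => ?_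
  calc z i / x i = y i / x i * (z i / y i) := by field_simp [(hy i).ne']
    _ ≤ _ := mul_le_mul (le_sup' (fun i => y i / x i) (mem_univ i))
        (le_sup' (fun i => z i / y i) (mem_univ i)) (div_pos (hz i) (hy i)).le
        (sup'_div_pos hx hy).le

theorem log_sup'_div_le_add (hx : ∀ i, 0 < x i) (hy : ∀ i, 0 < y i) (hz : ∀ i, 0 < z i) :
    log (univ.sup' univ_nonempty fun i => z i / x i) ≤
      log (univ.sup' univ_nonempty fun i => y i / x i) +
        log (univ.sup' univ_nonempty fun i => z i / y i) := by
  rw [← log_mul (sup'_div_pos hx hy).ne' (sup'_div_pos hy hz).ne']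
  exact log_le_log (sup'_div_pos hx hz) (sup'_div_le_mul hx hy hz)

theorem sup'_div_eq_one (hx : ∀ i, 0 < x i) (hle : y ≤ x) {j : ι} (hj : y j = x j) :
    univ.sup' univ_nonempty (fun i => y i / x i) = 1 :=
  le_antisymm (sup'_le _ _ fun i _ => div_le_one_of_le₀ (hle i) (hx i).le)
    (le_sup'_of_le _ (mem_univ j) (by rw [hj, div_self (hx j).ne']))

end MaxRatio

theorem Kpants_eq_log_sup' (x y : Fin 3 → ℝ) :
    Kpants x y = log (univ.sup' univ_nonempty fun i => y i / x i) :=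
  rfl

theorem Kpants_eq_zero_of_le {x y : Fin 3 → ℝ} (hx : ∀ i, 0 < x i) (hle : y ≤ x) {j : Fin 3}
    (hj : y j = x j) : Kpants x y = 0 := by
  rw [Kpants_eq_log_sup', sup'_div_eq_one hx hle hj, log_one]

/-- On the Teichmüller space of a hyperbolic pair of pants (parametrized by the triple of
boundary lengths in `(0,∞)³`), the function `K(x,y) = log max_i l_y(C_i)/l_x(C_i)`
satisfies the triangle inequality, but it is not an asymmetric metric: there exist `x ≠ y`
with `K(x,y) ≤ 0`, and indeed there exist distinct `x, y` with `K(x,y) = 0`. -/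
theorem stmt15 :
    (∀ x y z : Fin 3 → ℝ, (∀ i, 0 < x i) → (∀ i, 0 < y i) → (∀ i, 0 < z i) →
      Kpants x z ≤ Kpants x y + Kpants y z) ∧
    (∃ x y : Fin 3 → ℝ, (∀ i, 0 < x i) ∧ (∀ i, 0 < y i) ∧ x ≠ y ∧ Kpants x y ≤ 0) ∧
    (∃ x y : Fin 3 → ℝ, (∀ i, 0 < x i) ∧ (∀ i, 0 < y i) ∧ x ≠ y ∧ Kpants x y = 0) := by
  have hu : ∀ i, 0 < (![1, 2, 2] : Fin 3 → ℝ) i := by intro i; fin_cases i <;> norm_num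
  have hv : ∀ i, 0 < (![1, 1, 1] : Fin 3 → ℝ) i := by intro i; fin_cases i <;> norm_num
  have hne : (![1, 2, 2] : Fin 3 → ℝ) ≠ ![1, 1, 1] := fun h => by
    simpa using congrFun h 1
  have hK : Kpants ![1, 2, 2] ![1, 1, 1] = 0 :=
    Kpants_eq_zero_of_le (j := 0) hu (by intro i; fin_cases i <;> norm_num) rfl
  refine ⟨fun x y z hx hy hz => ?_, ⟨_, _, hu, hv, hne, hK.le⟩, ⟨_, _, hu, hv, hne, hK⟩⟩
  simpa only [Kpants_eq_log_sup'] using log_sup'_div_le_add hx hy hz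
end
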